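/- arXiv:1605.04922 — 5 statements merged into one kernel-verified Lean document; each statement's English description precedes it below -/
import Mathlib

section
/- Let q be a real number with q > 1, let p : {1,...,n} → ℝ be a probability distribution (p(x) ≥ 0 for all x and ∑_{x=1}^n p(x) = 1), and let y_1,...,y_n and y_0 be non-negative real numbers satisfying ∑_{x=1}^n p(x)·g(y_x) = g(y_0). Then ∑_{x=1}^n p(x)·g(q·y_x + q − 1) ≥ g(q·y_0 + q − 1). -/
/-- `g x = (x+1)·log₂(x+1) − x·log₂ x`, the entropy of a thermal state with
mean photon number `x` (with `g 0 = 0`, since `Real.logb 2 0 = 0`). -/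
noncomputable def g (x : ℝ) : ℝ := (x + 1) * Real.logb 2 (x + 1) - x * Real.logb 2 x

open Real Set

private lemma log2_pos : (0:ℝ) < Real.log 2 := Real.log_pos one_lt_two

private lemma g_eq (x : ℝ) :
    g x = ((x + 1) * Real.log (x + 1) - x * Real.log x) / Real.log 2 := by
  unfold g Real.logb; ring

private lemma g_zero : g 0 = 0 := by
  simp [g]

private lemma g_continuous : Continuous g := by
  have h : Continuous fun x : ℝ => ((x + 1) * Real.log (x + 1) - x * Real.log x) / Real.log 2 := by
    have h1 : Continuous fun x : ℝ => (x + 1) * Real.log (x + 1) :=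
      Real.continuous_mul_log.comp (continuous_id.add continuous_const)
    exact (h1.sub Real.continuous_mul_log).div_const _
  have : g = fun x : ℝ => ((x + 1) * Real.log (x + 1) - x * Real.log x) / Real.log 2 :=
    funext g_eq
  rw [this]; exact h

private lemma g_pos {x : ℝ} (hx : 0 < x) : 0 < g x := by
  have h1 : Real.logb 2 x ≤ Real.logb 2 (x + 1) :=
    Real.logb_le_logb_of_le one_lt_two hx (by linarith)
  have h2 : (0:ℝ) < Real.logb 2 (x + 1) := Real.logb_pos one_lt_two (by linarith)
  have h3 : x * Real.logb 2 x ≤ x * Real.logb 2 (x + 1) :=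
    mul_le_mul_of_nonneg_left h1 hx.le
  unfold g
  nlinarith

private lemma g_nonneg {x : ℝ} (hx : 0 ≤ x) : 0 ≤ g x := by
  rcases eq_or_lt_of_le hx with h | h
  · rw [← h, g_zero]
  · exact (g_pos h).le

private lemma g_hasDerivAt {x : ℝ} (hx : 0 < x) :
    HasDerivAt g ((Real.log (x + 1) - Real.log x) / Real.log 2) x := by
  have h1 : HasDerivAt (fun y : ℝ => (y + 1) * Real.log (y + 1)) (Real.log (x + 1) + 1) x := by
    have hinner : HasDerivAt (fun y : ℝ => y + 1) 1 x := (hasDerivAt_id x).add_const 1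
    have houter := Real.hasDerivAt_mul_log (x := x + 1) (by positivity)
    have := houter.comp x hinner
    simpa [Function.comp_def] using this
  have h2 : HasDerivAt (fun y : ℝ => y * Real.log y) (Real.log x + 1) x :=
    Real.hasDerivAt_mul_log hx.ne'
  have h3 := (h1.sub h2).div_const (Real.log 2)
  have hfun : (fun y : ℝ => ((y + 1) * Real.log (y + 1) - y * Real.log y) / Real.log 2) = g :=
    funext fun y => (g_eq y).symm
  simp only [Pi.sub_apply] at h3
  rw [hfun] at h3
  exact h3.congr_deriv (by ring)

/-- derivative of `y ↦ log (y+1) - log y`. -/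
private lemma hasDerivAt_L {y : ℝ} (hy : 0 < y) :
    HasDerivAt (fun t : ℝ => Real.log (t + 1) - Real.log t) ((y + 1)⁻¹ - y⁻¹) y := by
  have h1 : HasDerivAt (fun t : ℝ => Real.log (t + 1)) (y + 1)⁻¹ y := by
    have := (Real.hasDerivAt_log (x := y + 1) (by positivity)).comp y
      ((hasDerivAt_id y).add_const 1)
    simpa [Function.comp_def] using this
  exact h1.sub (Real.hasDerivAt_log hy.ne')

/-- `f t = t * (log (t+1) - log t)` is monotone on positive reals. -/
private lemma f_mono {a b : ℝ} (ha : 0 < a) (hab : a ≤ b) :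
    a * (Real.log (a + 1) - Real.log a) ≤ b * (Real.log (b + 1) - Real.log b) := by
  set f : ℝ → ℝ := fun t => t * (Real.log (t + 1) - Real.log t) with hf
  have key : MonotoneOn f (Set.Ici a) := by
    apply monotoneOn_of_deriv_nonneg (convex_Ici a)
    · intro t ht
      have ht' : 0 < t := lt_of_lt_of_le ha ht
      exact (((hasDerivAt_id t).mul (hasDerivAt_L ht')).continuousAt).continuousWithinAt
    · intro t ht
      rw [interior_Ici] at ht
      have ht' : 0 < t := lt_trans ha ht
      exact (((hasDerivAt_id t).mul (hasDerivAt_L ht')).differentiableAt).differentiableWithinAt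
    · intro t ht
      rw [interior_Ici] at ht
      have ht' : 0 < t := lt_trans ha ht
      have hd := (hasDerivAt_id t).mul (hasDerivAt_L ht')
      simp only [Pi.mul_def, id_eq, one_mul] at hd
      rw [hf, hd.deriv]
      have hlog : Real.log (t / (t + 1)) < t / (t + 1) - 1 := by
        apply Real.log_lt_sub_one_of_pos (by positivity)
        have : t / (t + 1) < 1 := by
          rw [div_lt_one (by linarith)]
          linarith
        exact this.ne
      rw [Real.log_div ht'.ne' (by positivity)] at hlog
      have ht1 : (0:ℝ) < t + 1 := by linarith
      have hfrac : t / (t + 1) - 1 = -(t + 1)⁻¹ := by field_simp; ring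
      rw [hfrac] at hlog
      have h3 : (t+1)⁻¹ ≤ Real.log (t + 1) - Real.log t := by linarith
      have h4 : t * ((t + 1)⁻¹ - t⁻¹) = -(t+1)⁻¹ := by
        field_simp
        ring
      nlinarith
  have := key (Set.self_mem_Ici) (show b ∈ Set.Ici a from hab) hab
  simpa [hf] using this

/-- The key monotonicity: `Ψ y = N y / L y` is monotone on `(0, ∞)`,
where `N y = log (q y + q) - log (q y + q - 1)` and `L y = log (y+1) - log y`. -/
private lemma psi_mono {q : ℝ} (hq : 1 < q) :
    MonotoneOn (fun y : ℝ =>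
      (Real.log (q * y + q) - Real.log (q * y + q - 1)) / (Real.log (y + 1) - Real.log y))
      (Set.Ioi 0) := by
  set Ψ : ℝ → ℝ := fun y =>
    (Real.log (q * y + q) - Real.log (q * y + q - 1)) / (Real.log (y + 1) - Real.log y) with hΨ
  have hqpos : 0 < q := by linarith
  -- basic positivity facts
  have hu : ∀ y : ℝ, 0 < y → 0 < q * y + q - 1 := by intro y hy; nlinarith
  have hu1 : ∀ y : ℝ, 0 < y → 0 < q * y + q := by intro y hy; nlinarith
  have hL : ∀ y : ℝ, 0 < y → 0 < Real.log (y + 1) - Real.log y := by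
    intro y hy
    have := Real.log_lt_log hy (show y < y + 1 by linarith)
    linarith
  have hN : ∀ y : ℝ, 0 < y → 0 < Real.log (q * y + q) - Real.log (q * y + q - 1) := by
    intro y hy
    have := Real.log_lt_log (hu y hy) (show q * y + q - 1 < q * y + q by linarith)
    linarith
  -- derivative of Ψ
  have hderiv : ∀ y : ℝ, 0 < y → HasDerivAt Ψ
      (((q / (q * y + q) - q / (q * y + q - 1)) * (Real.log (y + 1) - Real.log y)
        - (Real.log (q * y + q) - Real.log (q * y + q - 1)) * ((y + 1)⁻¹ - y⁻¹))
        / (Real.log (y + 1) - Real.log y) ^ 2) y := by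
    intro y hy
    have hNy : HasDerivAt (fun t : ℝ => Real.log (q * t + q) - Real.log (q * t + q - 1))
        (q / (q * y + q) - q / (q * y + q - 1)) y := by
      have hi1 : HasDerivAt (fun t : ℝ => q * t + q) q y := by
        simpa using ((hasDerivAt_id y).const_mul q).add_const q
      have hi2 : HasDerivAt (fun t : ℝ => q * t + q - 1) q y := hi1.sub_const 1
      have h1 : HasDerivAt (fun t : ℝ => Real.log (q * t + q)) (q / (q * y + q)) y := by
        have := (Real.hasDerivAt_log (hu1 y hy).ne').comp y hi1
        simpa [Function.comp_def, div_eq_inv_mul, mul_comm] using this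
      have h2 : HasDerivAt (fun t : ℝ => Real.log (q * t + q - 1)) (q / (q * y + q - 1)) y := by
        have := (Real.hasDerivAt_log (hu y hy).ne').comp y hi2
        simpa [Function.comp_def, div_eq_inv_mul, mul_comm] using this
      exact h1.sub h2
    exact hNy.div (hasDerivAt_L hy) (hL y hy).ne'
  -- sign of the numerator of Ψ'
  have hsign : ∀ y : ℝ, 0 < y →
      0 ≤ (q / (q * y + q) - q / (q * y + q - 1)) * (Real.log (y + 1) - Real.log y)
        - (Real.log (q * y + q) - Real.log (q * y + q - 1)) * ((y + 1)⁻¹ - y⁻¹) := by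
    intro y hy
    set L := Real.log (y + 1) - Real.log y with hLdef
    set N := Real.log (q * y + q) - Real.log (q * y + q - 1) with hNdef
    have hkey : y * L ≤ (q * y + q - 1) * N := by
      have h := f_mono hy (show y ≤ q * y + q - 1 by nlinarith)
      have harg : q * y + q - 1 + 1 = q * y + q := by ring
      rw [harg] at h
      exact h
    have hup : 0 < q * y + q - 1 := hu y hy
    have hup1 : 0 < q * y + q := hu1 y hy
    have hrw : (q / (q * y + q) - q / (q * y + q - 1)) * L - N * ((y + 1)⁻¹ - y⁻¹)
        = (q * (y + 1) * ((q * y + q - 1) * N - y * L))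
          / (y * (y + 1) * (q * y + q - 1) * (q * y + q)) := by
      have h1 : (q * y + q) = q * (y + 1) := by ring
      have := hup.ne'
      have := hup1.ne'
      have : y ≠ 0 := hy.ne'
      have : y + 1 ≠ 0 := by positivity
      rw [div_sub_div _ _ (by assumption) (by assumption), inv_sub_inv (by assumption) (by assumption),
        div_mul_eq_mul_div, mul_div_assoc', div_sub_div _ _ (by positivity) (by positivity),
        div_eq_div_iff (by positivity) (by positivity)]
      ring
    rw [hrw]
    apply div_nonneg
    · have : 0 ≤ (q * y + q - 1) * N - y * L := by linarith
      positivity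
    · positivity
  -- conclude monotonicity
  apply monotoneOn_of_deriv_nonneg (convex_Ioi 0)
  · intro t ht
    exact ((hderiv t ht).continuousAt).continuousWithinAt
  · intro t ht
    rw [interior_Ioi] at ht
    exact ((hderiv t ht).differentiableAt).differentiableWithinAt
  · intro t ht
    rw [interior_Ioi] at ht
    rw [(hderiv t ht).deriv]
    apply div_nonneg (hsign t ht)
    positivity

/-- derivative of `φ y = g (q y + q - 1) - c * g y` for `y > 0`. -/
private lemma phi_hasDerivAt {q c y : ℝ} (hq : 1 < q) (hy : 0 < y) :
    HasDerivAt (fun t : ℝ => g (q * t + q - 1) - c * g t)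
      ((q * (Real.log (q * y + q) - Real.log (q * y + q - 1))
        - c * (Real.log (y + 1) - Real.log y)) / Real.log 2) y := by
  have hu : 0 < q * y + q - 1 := by nlinarith
  have hi : HasDerivAt (fun t : ℝ => q * t + q - 1) q y := by
    simpa using (((hasDerivAt_id y).const_mul q).add_const q).sub_const 1
  have h1 : HasDerivAt (fun t : ℝ => g (q * t + q - 1))
      ((Real.log (q * y + q) - Real.log (q * y + q - 1)) / Real.log 2 * q) y := by
    have := (g_hasDerivAt hu).comp y hi
    have harg : q * y + q - 1 + 1 = q * y + q := by ring
    rw [harg] at this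
    exact this
  have h2 : HasDerivAt (fun t : ℝ => c * g t)
      (c * ((Real.log (y + 1) - Real.log y) / Real.log 2)) y :=
    (g_hasDerivAt hy).const_mul c
  exact (h1.sub h2).congr_deriv (by ring)

/-- The central pointwise tangent-line inequality, for `y0 > 0`. -/
private lemma tangent_ineq {q y0 : ℝ} (hq : 1 < q) (hy0 : 0 < y0) {a : ℝ} (ha : 0 ≤ a) :
    g (q * y0 + q - 1)
      + (q * (Real.log (q * y0 + q) - Real.log (q * y0 + q - 1))
          / (Real.log (y0 + 1) - Real.log y0)) * (g a - g y0)
    ≤ g (q * a + q - 1) := by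
  set c : ℝ := q * (Real.log (q * y0 + q) - Real.log (q * y0 + q - 1))
      / (Real.log (y0 + 1) - Real.log y0) with hc
  set φ : ℝ → ℝ := fun t => g (q * t + q - 1) - c * g t with hφ
  have hL : ∀ y : ℝ, 0 < y → 0 < Real.log (y + 1) - Real.log y := by
    intro y hy
    have := Real.log_lt_log hy (show y < y + 1 by linarith)
    linarith
  -- sign of φ' via Ψ monotone
  have hsign : ∀ t : ℝ, 0 < t →
      (q * (Real.log (q * t + q) - Real.log (q * t + q - 1))
        - c * (Real.log (t + 1) - Real.log t)) / Real.log 2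
      = q * (Real.log (t + 1) - Real.log t) / Real.log 2 *
        ((Real.log (q * t + q) - Real.log (q * t + q - 1)) / (Real.log (t + 1) - Real.log t)
          - (Real.log (q * y0 + q) - Real.log (q * y0 + q - 1))
            / (Real.log (y0 + 1) - Real.log y0)) := by
    intro t ht
    have hne1 : Real.log (t + 1) - Real.log t ≠ 0 := (hL t ht).ne'
    have hne0 : Real.log (y0 + 1) - Real.log y0 ≠ 0 := (hL y0 hy0).ne'
    have hne2 : Real.log 2 ≠ 0 := log2_pos.ne'
    rw [hc]
    field_simp
  have hmono := psi_mono hq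
  -- φ is monotone on [y0, ∞)
  have hmono1 : MonotoneOn φ (Set.Ici y0) := by
    apply monotoneOn_of_deriv_nonneg (convex_Ici y0)
    · exact (g_continuous.comp (by continuity) |>.sub
        (continuous_const.mul g_continuous)).continuousOn
    · intro t ht
      rw [interior_Ici] at ht
      exact ((phi_hasDerivAt hq (hy0.trans ht)).differentiableAt).differentiableWithinAt
    · intro t ht
      rw [interior_Ici] at ht
      have ht' : 0 < t := hy0.trans ht
      rw [(phi_hasDerivAt hq ht').deriv, hsign t ht']
      have hΨ := hmono (Set.mem_Ioi.mpr hy0) (Set.mem_Ioi.mpr ht') ht.le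
      have h1 : 0 ≤ q * (Real.log (t + 1) - Real.log t) / Real.log 2 := by
        have := hL t ht'
        have := log2_pos
        positivity
      have h2 : (0:ℝ) ≤ (Real.log (q * t + q) - Real.log (q * t + q - 1)) /
          (Real.log (t + 1) - Real.log t)
          - (Real.log (q * y0 + q) - Real.log (q * y0 + q - 1)) /
            (Real.log (y0 + 1) - Real.log y0) := by
        simpa using sub_nonneg.mpr hΨ
      exact mul_nonneg h1 h2
  -- φ is antitone on [0, y0]
  have hmono2 : AntitoneOn φ (Set.Icc 0 y0) := by
    apply antitoneOn_of_deriv_nonpos (convex_Icc 0 y0)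
    · exact (g_continuous.comp (by continuity) |>.sub
        (continuous_const.mul g_continuous)).continuousOn
    · intro t ht
      rw [interior_Icc] at ht
      exact ((phi_hasDerivAt hq ht.1).differentiableAt).differentiableWithinAt
    · intro t ht
      rw [interior_Icc] at ht
      have ht' : 0 < t := ht.1
      rw [(phi_hasDerivAt hq ht').deriv, hsign t ht']
      have hΨ := hmono (Set.mem_Ioi.mpr ht') (Set.mem_Ioi.mpr hy0) ht.2.le
      have h1 : 0 ≤ q * (Real.log (t + 1) - Real.log t) / Real.log 2 := by
        have := hL t ht'
        have := log2_pos
        positivity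
      have h2 : (Real.log (q * t + q) - Real.log (q * t + q - 1)) /
          (Real.log (t + 1) - Real.log t)
          - (Real.log (q * y0 + q) - Real.log (q * y0 + q - 1)) /
            (Real.log (y0 + 1) - Real.log y0) ≤ 0 := by
        simpa using sub_nonpos.mpr hΨ
      exact mul_nonpos_of_nonneg_of_nonpos h1 h2
  have hkey : φ y0 ≤ φ a := by
    rcases le_or_gt a y0 with h | h
    · exact hmono2 (Set.mem_Icc.mpr ⟨ha, h⟩) (Set.mem_Icc.mpr ⟨hy0.le, le_refl _⟩) h
    · exact hmono1 (Set.mem_Ici.mpr (le_refl _)) (Set.mem_Ici.mpr h.le) h.le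
  simp only [hφ] at hkey
  linarith

theorem stmt_0 (n : ℕ) (q : ℝ) (hq : 1 < q)
    (p y : Fin n → ℝ) (hp : ∀ x, 0 ≤ p x) (hpsum : ∑ x, p x = 1)
    (hy : ∀ x, 0 ≤ y x) (y0 : ℝ) (hy0 : 0 ≤ y0)
    (heq : ∑ x, p x * g (y x) = g y0) :
    ∑ x, p x * g (q * y x + q - 1) ≥ g (q * y0 + q - 1) := by
  rcases eq_or_lt_of_le hy0 with h0 | h0
  · -- case y0 = 0
    rw [← h0] at heq ⊢
    rw [g_zero] at heq
    have hterm : ∀ x ∈ Finset.univ, (0:ℝ) ≤ p x * g (y x) := fun x _ =>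
      mul_nonneg (hp x) (g_nonneg (hy x))
    have hzero := (Finset.sum_eq_zero_iff_of_nonneg hterm).mp heq
    have heach : ∀ x : Fin n, p x * g (q * y x + q - 1) = p x * g (q * 0 + q - 1) := by
      intro x
      rcases eq_or_ne (p x) 0 with hpx | hpx
      · rw [hpx]; ring
      · have h := hzero x (Finset.mem_univ x)
        have hg : g (y x) = 0 := by
          rcases mul_eq_zero.mp h with h' | h'
          · exact absurd h' hpx
          · exact h'
        have hyx : y x = 0 := by
          by_contra hne
          have : 0 < y x := lt_of_le_of_ne (hy x) (Ne.symm hne)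
          exact (g_pos this).ne' hg
        rw [hyx]
    rw [Finset.sum_congr rfl (fun x _ => heach x), ← Finset.sum_mul, hpsum, one_mul]
  · -- case y0 > 0
    set c : ℝ := q * (Real.log (q * y0 + q) - Real.log (q * y0 + q - 1))
        / (Real.log (y0 + 1) - Real.log y0) with hc
    have hpoint : ∀ x : Fin n,
        p x * (g (q * y0 + q - 1) + c * (g (y x) - g y0)) ≤ p x * g (q * y x + q - 1) := by
      intro x
      exact mul_le_mul_of_nonneg_left (tangent_ineq hq h0 (hy x)) (hp x)
    have hsum := Finset.sum_le_sum (fun x (_ : x ∈ Finset.univ) => hpoint x)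
    have hcalc : ∑ x : Fin n, p x * (g (q * y0 + q - 1) + c * (g (y x) - g y0))
        = g (q * y0 + q - 1) := by
      have expand : ∀ x : Fin n, p x * (g (q * y0 + q - 1) + c * (g (y x) - g y0))
          = g (q * y0 + q - 1) * p x + c * (p x * g (y x)) - (c * g y0) * p x := by
        intro x; ring
      rw [Finset.sum_congr rfl (fun x _ => expand x)]
      rw [Finset.sum_sub_distrib, Finset.sum_add_distrib, ← Finset.mul_sum, ← Finset.mul_sum,
        ← Finset.mul_sum, hpsum, heq]
      ring
    rw [ge_iff_le, ← hcalc]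
    exact hsum
end

section
/- Let q be a real number with q ∈ [0,1], let C ≥ 0 be a real number, let p : {1,...,n} → ℝ be a probability distribution (p(x) ≥ 0 for all x and ∑_{x=1}^n p(x) = 1), and let y_1,...,y_n and y_0 be non-negative real numbers satisfying ∑_{x=1}^n p(x)·g(y_x) = g(y_0). Then ∑_{x=1}^n p(x)·g(q·y_x + C) ≥ g(q·y_0 + C). -/
/-- Natural-log version of `g`. -/
noncomputable def Gf (t : ℝ) : ℝ := (t + 1) * Real.log (t + 1) - t * Real.log t

/-- `Uf t = ln (t+1) - ln t`, the derivative of `Gf` (for `t > 0`). -/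
noncomputable def Uf (t : ℝ) : ℝ := Real.log (t + 1) - Real.log t

lemma g_eq_Gf (x : ℝ) : g x = Gf x / Real.log 2 := by
  unfold g Gf Real.logb; ring

lemma Uf_pos {t : ℝ} (ht : 0 < t) : 0 < Uf t :=
  sub_pos.2 (Real.log_lt_log ht (by linarith))

lemma Uf_gt {t : ℝ} (ht : 0 < t) : 1 / (t + 1) < Uf t := by
  have h : Real.log (t / (t + 1)) < t / (t + 1) - 1 :=
    Real.log_lt_sub_one_of_pos (by positivity)
      (ne_of_lt ((div_lt_one (by linarith)).2 (by linarith)))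
  rw [Real.log_div (ne_of_gt ht) (by linarith)] at h
  have h2 : t / (t + 1) - 1 = -(1 / (t + 1)) := by field_simp; ring
  unfold Uf; rw [h2] at h; linarith

lemma hasDerivAt_Uf {t : ℝ} (ht : 0 < t) :
    HasDerivAt Uf (1 / (t + 1) - 1 / t) t := by
  have h1 : HasDerivAt (fun s : ℝ => Real.log (s + 1)) (1 / (t + 1)) t := by
    have := (Real.hasDerivAt_log (by linarith : t + 1 ≠ 0)).comp t
      ((hasDerivAt_id t).add_const 1)
    simpa [one_div, Function.comp_def] using this
  have h2 : HasDerivAt Real.log (1 / t) t := by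
    simpa [one_div] using Real.hasDerivAt_log (ne_of_gt ht)
  have := h1.sub h2
  unfold Uf
  exact this

lemma hasDerivAt_Gf {t : ℝ} (ht : 0 < t) : HasDerivAt Gf (Uf t) t := by
  have h1 : HasDerivAt (fun s : ℝ => (s + 1) * Real.log (s + 1))
      (Real.log (t + 1) + 1) t := by
    have := (Real.hasDerivAt_mul_log (by linarith : t + (1:ℝ) ≠ 0)).comp t
      ((hasDerivAt_id t).add_const 1)
    simpa [Function.comp_def] using this
  have h2 : HasDerivAt (fun s : ℝ => s * Real.log s) (Real.log t + 1) t :=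
    Real.hasDerivAt_mul_log (ne_of_gt ht)
  have := h1.sub h2
  unfold Uf Gf
  refine this.congr_deriv ?_
  ring

lemma continuous_Gf : Continuous Gf := by
  have h1 : Continuous fun t : ℝ => (t + 1) * Real.log (t + 1) :=
    Real.continuous_mul_log.comp (continuous_id.add continuous_const)
  exact h1.sub Real.continuous_mul_log

lemma Gf_zero : Gf 0 = 0 := by simp [Gf]

lemma Gf_pos {t : ℝ} (ht : 0 < t) : 0 < Gf t := by
  have h1 : t * Real.log t < t * Real.log (t + 1) :=
    mul_lt_mul_of_pos_left (Real.log_lt_log ht (by linarith)) ht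
  have h2 : 0 < Real.log (t + 1) := Real.log_pos (by linarith)
  unfold Gf; nlinarith

lemma Gf_nonneg {t : ℝ} (ht : 0 ≤ t) : 0 ≤ Gf t := by
  rcases eq_or_lt_of_le ht with h | h
  · rw [← h, Gf_zero]
  · exact le_of_lt (Gf_pos h)

/-- `ρ(t) = (t+1)·U(t)` is antitone on `(0,∞)`. -/
lemma rho_anti : AntitoneOn (fun t => (t + 1) * Uf t) (Set.Ioi (0 : ℝ)) := by
  have hD : Convex ℝ (Set.Ioi (0 : ℝ)) := convex_Ioi 0
  have hint : interior (Set.Ioi (0 : ℝ)) = Set.Ioi 0 := interior_Ioi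
  apply antitoneOn_of_hasDerivWithinAt_nonpos hD
    (f' := fun t => Uf t + (t + 1) * (1 / (t + 1) - 1 / t))
  · intro x hx
    have hx : (0:ℝ) < x := hx
    exact (((hasDerivAt_id x).add_const 1).mul (hasDerivAt_Uf hx)).continuousAt.continuousWithinAt
  · intro x hx
    rw [hint] at hx ⊢
    have hx : (0:ℝ) < x := hx
    have := ((hasDerivAt_id x).add_const 1).mul (hasDerivAt_Uf hx)
    refine (HasDerivAt.hasDerivWithinAt ?_)
    refine this.congr_deriv ?_
    simp only [id_eq]
    ring
  · intro x hx
    rw [hint] at hx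
    have hx : (0:ℝ) < x := hx
    have h1 : Uf x < 1 / x := by
      have h : Real.log ((x + 1) / x) < (x + 1) / x - 1 :=
        Real.log_lt_sub_one_of_pos (by positivity)
          (ne_of_gt ((one_lt_div hx).2 (by linarith)))
      rw [Real.log_div (by linarith) (ne_of_gt hx)] at h
      have h2 : (x + 1) / x - 1 = 1 / x := by field_simp; ring
      unfold Uf; linarith
    have h3 : (x + 1) * (1 / (x + 1) - 1 / x) = 1 - (x + 1) / x := by
      field_simp
    have h4 : 1 - (x + 1) / x = -(1 / x) := by field_simp; ring
    rw [h3, h4]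
    linarith

/-- `ψ(t) = t·(t+1)·U(t)` is monotone on `(0,∞)`. -/
lemma psi_mono_s1 : MonotoneOn (fun t => t * ((t + 1) * Uf t)) (Set.Ioi (0 : ℝ)) := by
  have hD : Convex ℝ (Set.Ioi (0 : ℝ)) := convex_Ioi 0
  have hint : interior (Set.Ioi (0 : ℝ)) = Set.Ioi 0 := interior_Ioi
  apply monotoneOn_of_hasDerivWithinAt_nonneg hD
    (f' := fun t => (2 * t + 1) * Uf t - 1)
  · intro x hx
    have hx : (0:ℝ) < x := hx
    exact ((hasDerivAt_id x).mul
      (((hasDerivAt_id x).add_const 1).mul (hasDerivAt_Uf hx))).continuousAt.continuousWithinAt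
  · intro x hx
    rw [hint] at hx ⊢
    have hx : (0:ℝ) < x := hx
    have := (hasDerivAt_id x).mul
      (((hasDerivAt_id x).add_const 1).mul (hasDerivAt_Uf hx))
    refine HasDerivAt.hasDerivWithinAt ?_
    refine this.congr_deriv ?_
    have hx' : x ≠ 0 := ne_of_gt hx
    have hx1 : x + 1 ≠ 0 := by linarith
    simp only [id_eq, Pi.mul_apply]
    field_simp
    ring
  · intro x hx
    rw [hint] at hx
    have hx : (0:ℝ) < x := hx
    have h1 : 1 / (x + 1) < Uf x := Uf_gt hx
    have h2 : (1:ℝ) < (2 * x + 1) * (1 / (x + 1)) := by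
      rw [mul_one_div, lt_div_iff₀ (by linarith)]
      linarith
    have h3 : (2 * x + 1) * (1 / (x + 1)) < (2 * x + 1) * Uf x :=
      mul_lt_mul_of_pos_left h1 (by linarith)
    linarith

/-- Key inequality: `ψ(qy+C) ≥ q·ψ(y)`. -/
lemma psi_key {q C y : ℝ} (hq : 0 < q) (hq1 : q ≤ 1) (hC : 0 ≤ C) (hy : 0 < y) :
    q * (y * ((y + 1) * Uf y)) ≤
      (q * y + C) * ((q * y + C + 1) * Uf (q * y + C)) := by
  have hqy : 0 < q * y := mul_pos hq hy
  have h1 : q * y * ((q * y + 1) * Uf (q * y)) ≤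
      (q * y + C) * ((q * y + C + 1) * Uf (q * y + C)) :=
    psi_mono_s1 (Set.mem_Ioi.2 hqy) (Set.mem_Ioi.2 (by linarith)) (by linarith)
  have h2 : (y + 1) * Uf y ≤ (q * y + 1) * Uf (q * y) :=
    rho_anti (Set.mem_Ioi.2 hqy) (Set.mem_Ioi.2 hy) (by nlinarith)
  have h3 : q * y * ((y + 1) * Uf y) ≤ q * y * ((q * y + 1) * Uf (q * y)) :=
    mul_le_mul_of_nonneg_left h2 (le_of_lt hqy)
  nlinarith

/-- Monotonicity of `y ↦ U(qy+C)/U(y)` on `(0,∞)`. -/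
lemma ratio_mono {q C : ℝ} (hq : 0 < q) (hq1 : q ≤ 1) (hC : 0 ≤ C) :
    MonotoneOn (fun y => Uf (q * y + C) / Uf y) (Set.Ioi (0 : ℝ)) := by
  have hD : Convex ℝ (Set.Ioi (0 : ℝ)) := convex_Ioi 0
  have hint : interior (Set.Ioi (0 : ℝ)) = Set.Ioi 0 := interior_Ioi
  have hderiv : ∀ x ∈ Set.Ioi (0:ℝ), HasDerivAt (fun y => Uf (q * y + C) / Uf y)
      (((1 / (q * x + C + 1) - 1 / (q * x + C)) * q * Uf x -
        Uf (q * x + C) * (1 / (x + 1) - 1 / x)) / (Uf x) ^ 2) x := by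
    intro x hx
    have hx : (0:ℝ) < x := hx
    have ha : 0 < q * x + C := by positivity
    have hnum : HasDerivAt (fun y => Uf (q * y + C))
        ((1 / (q * x + C + 1) - 1 / (q * x + C)) * q) x := by
      have hin : HasDerivAt (fun y : ℝ => q * y + C) q x := by
        simpa using ((hasDerivAt_id x).const_mul q).add_const C
      exact (hasDerivAt_Uf ha).comp x hin
    exact hnum.div (hasDerivAt_Uf hx) (ne_of_gt (Uf_pos hx))
  apply monotoneOn_of_hasDerivWithinAt_nonneg hD
    (f' := fun x => ((1 / (q * x + C + 1) - 1 / (q * x + C)) * q * Uf x -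
        Uf (q * x + C) * (1 / (x + 1) - 1 / x)) / (Uf x) ^ 2)
  · intro x hx
    exact (hderiv x hx).continuousAt.continuousWithinAt
  · intro x hx
    rw [hint] at hx ⊢
    exact (hderiv x hx).hasDerivWithinAt
  · intro x hx
    rw [hint] at hx
    have hx : (0:ℝ) < x := hx
    have ha : 0 < q * x + C := by positivity
    apply div_nonneg _ (sq_nonneg _)
    have hkey := psi_key hq hq1 hC hx
    have hUB : 0 < Uf x := Uf_pos hx
    have hUa : 0 < Uf (q * x + C) := Uf_pos ha
    have hA : 0 < (q * x + C) * (q * x + C + 1) := by positivity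
    have hB : 0 < x * (x + 1) := by positivity
    have h : q * Uf x / ((q * x + C) * (q * x + C + 1)) ≤ Uf (q * x + C) / (x * (x + 1)) := by
      rw [div_le_div_iff₀ hA hB]
      nlinarith
    have e : (1 / (q * x + C + 1) - 1 / (q * x + C)) * q * Uf x -
        Uf (q * x + C) * (1 / (x + 1) - 1 / x)
        = Uf (q * x + C) / (x * (x + 1)) - q * Uf x / ((q * x + C) * (q * x + C + 1)) := by
      field_simp
      ring
    rw [e]
    linarith
  done

/-- Tangent-line inequality for `φ(z) = Gf (qz+C) - L·Gf z`. -/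
lemma tangent {q C : ℝ} (hq : 0 < q) (hq1 : q ≤ 1) (hC : 0 ≤ C) {y0 : ℝ} (hy0 : 0 < y0)
    {y : ℝ} (hy : 0 ≤ y) :
    Gf (q * y0 + C) - q * Uf (q * y0 + C) / Uf y0 * Gf y0 ≤
      Gf (q * y + C) - q * Uf (q * y0 + C) / Uf y0 * Gf y := by
  set L := q * Uf (q * y0 + C) / Uf y0 with hL
  set φ : ℝ → ℝ := fun z => Gf (q * z + C) - L * Gf z with hφ
  have hcont : Continuous φ := by
    exact (continuous_Gf.comp (by continuity)).sub (continuous_const.mul continuous_Gf)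
  have hderiv : ∀ x : ℝ, 0 < x → HasDerivAt φ (q * Uf (q * x + C) - L * Uf x) x := by
    intro x hx
    have ha : 0 < q * x + C := by positivity
    have h1 : HasDerivAt (fun z => Gf (q * z + C)) (Uf (q * x + C) * q) x := by
      have hin : HasDerivAt (fun z : ℝ => q * z + C) q x := by
        simpa using ((hasDerivAt_id x).const_mul q).add_const C
      exact (hasDerivAt_Gf ha).comp x hin
    have h2 := h1.sub ((hasDerivAt_Gf hx).const_mul L)
    refine h2.congr_deriv ?_
    ring
  have hU0 : 0 < Uf y0 := Uf_pos hy0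
  rcases le_or_gt y0 y with hcase | hcase
  · have hmono : MonotoneOn φ (Set.Ici y0) := by
      apply monotoneOn_of_hasDerivWithinAt_nonneg (convex_Ici y0)
        (f' := fun x => q * Uf (q * x + C) - L * Uf x) hcont.continuousOn
      · intro x hx
        rw [interior_Ici] at hx ⊢
        exact (hderiv x (lt_trans hy0 hx)).hasDerivWithinAt
      · intro x hx
        rw [interior_Ici] at hx
        have hx0 : 0 < x := lt_trans hy0 hx
        have hUx : 0 < Uf x := Uf_pos hx0
        have hr := ratio_mono hq hq1 hC (Set.mem_Ioi.2 hy0) (Set.mem_Ioi.2 hx0) (le_of_lt hx)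
        have h2 : Uf (q * y0 + C) / Uf y0 * Uf x ≤ Uf (q * x + C) / Uf x * Uf x :=
          mul_le_mul_of_nonneg_right hr hUx.le
        rw [div_mul_cancel₀ _ (ne_of_gt hUx)] at h2
        have h3 : q * (Uf (q * y0 + C) / Uf y0 * Uf x) ≤ q * Uf (q * x + C) :=
          mul_le_mul_of_nonneg_left h2 hq.le
        have h4 : L * Uf x = q * (Uf (q * y0 + C) / Uf y0 * Uf x) := by
          rw [hL]; ring
        rw [sub_nonneg, h4]
        exact h3
    exact hmono (Set.mem_Ici.2 (le_refl y0)) (Set.mem_Ici.2 hcase) hcase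
  · have hanti : AntitoneOn φ (Set.Icc 0 y0) := by
      apply antitoneOn_of_hasDerivWithinAt_nonpos (convex_Icc 0 y0)
        (f' := fun x => q * Uf (q * x + C) - L * Uf x) hcont.continuousOn
      · intro x hx
        rw [interior_Icc] at hx ⊢
        exact (hderiv x hx.1).hasDerivWithinAt
      · intro x hx
        rw [interior_Icc] at hx
        obtain ⟨hx0, hxy0⟩ := hx
        have hUx : 0 < Uf x := Uf_pos hx0
        have hr := ratio_mono hq hq1 hC (Set.mem_Ioi.2 hx0) (Set.mem_Ioi.2 hy0) (le_of_lt hxy0)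
        have h2 : Uf (q * x + C) / Uf x * Uf x ≤ Uf (q * y0 + C) / Uf y0 * Uf x :=
          mul_le_mul_of_nonneg_right hr hUx.le
        rw [div_mul_cancel₀ _ (ne_of_gt hUx)] at h2
        have h3 : q * Uf (q * x + C) ≤ q * (Uf (q * y0 + C) / Uf y0 * Uf x) :=
          mul_le_mul_of_nonneg_left h2 hq.le
        have h4 : L * Uf x = q * (Uf (q * y0 + C) / Uf y0 * Uf x) := by
          rw [hL]; ring
        rw [sub_nonpos, h4]
        exact h3
    exact hanti (Set.mem_Icc.2 ⟨hy, hcase.le⟩) (Set.mem_Icc.2 ⟨hy0.le, le_refl y0⟩) hcase.le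

theorem stmt_1 (n : ℕ) (q : ℝ) (hq0 : 0 ≤ q) (hq1 : q ≤ 1) (C : ℝ) (hC : 0 ≤ C)
    (p y : Fin n → ℝ) (hp : ∀ x, 0 ≤ p x) (hpsum : ∑ x, p x = 1)
    (hy : ∀ x, 0 ≤ y x) (y0 : ℝ) (hy0 : 0 ≤ y0)
    (heq : ∑ x, p x * g (y x) = g y0) :
    ∑ x, p x * g (q * y x + C) ≥ g (q * y0 + C) := by
  have hlog2 : (0:ℝ) < Real.log 2 := Real.log_pos one_lt_two
  rcases eq_or_lt_of_le hq0 with hq | hq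
  · -- q = 0 : both sides are g C
    simp only [← hq, zero_mul, zero_add]
    rw [← Finset.sum_mul, hpsum, one_mul]
  · rcases eq_or_lt_of_le hy0 with hy0' | hy0'
    · -- y0 = 0 : every y x with p x > 0 must be 0
      have hg0 : g y0 = 0 := by rw [← hy0']; simp [g]
      have hnn : ∀ x ∈ Finset.univ, (0:ℝ) ≤ p x * g (y x) := by
        intro x _
        exact mul_nonneg (hp x) (by rw [g_eq_Gf]; exact div_nonneg (Gf_nonneg (hy x)) hlog2.le)
      have hterm : ∀ x ∈ Finset.univ, p x * g (y x) = 0 :=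
        (Finset.sum_eq_zero_iff_of_nonneg hnn).1 (heq.trans hg0)
      have hcongr : ∀ x ∈ Finset.univ, p x * g (q * y x + C) = p x * g C := by
        intro x _
        rcases eq_or_lt_of_le (hp x) with hpx | hpx
        · rw [← hpx, zero_mul, zero_mul]
        · have h0 : g (y x) = 0 :=
            (mul_eq_zero.1 (hterm x (Finset.mem_univ x))).resolve_left (ne_of_gt hpx)
          have hyx : y x = 0 := by
            by_contra h
            have hyxp : 0 < y x := lt_of_le_of_ne (hy x) (Ne.symm h)
            have hGp : 0 < Gf (y x) := Gf_pos hyxp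
            rw [g_eq_Gf] at h0
            have : Gf (y x) = 0 := by
              have := (div_eq_zero_iff.1 h0)
              rcases this with h' | h'
              · exact h'
              · exact absurd h' (ne_of_gt hlog2)
            linarith
          rw [hyx, mul_zero, zero_add]
      rw [Finset.sum_congr rfl hcongr, ← Finset.sum_mul, hpsum, one_mul, ← hy0', mul_zero,
        zero_add]
    · -- main case : y0 > 0
      set L := q * Uf (q * y0 + C) / Uf y0 with hL
      have heqG : ∑ x, p x * Gf (y x) = Gf y0 := by
        have h := heq
        simp only [g_eq_Gf] at h
        have e : ∑ x, p x * (Gf (y x) / Real.log 2) = (∑ x, p x * Gf (y x)) / Real.log 2 := by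
          rw [Finset.sum_div]
          exact Finset.sum_congr rfl fun x _ => (mul_div_assoc _ _ _).symm
        rw [e, div_eq_div_iff (ne_of_gt hlog2) (ne_of_gt hlog2)] at h
        exact mul_right_cancel₀ (ne_of_gt hlog2) h
      have hpt : ∀ x, p x * (Gf (q * y0 + C) - L * Gf y0) ≤
          p x * (Gf (q * y x + C) - L * Gf (y x)) := fun x =>
        mul_le_mul_of_nonneg_left (tangent hq hq1 hC hy0' (hy x)) (hp x)
      have hsum := Finset.sum_le_sum fun x (_ : x ∈ Finset.univ) => hpt x
      have e1 : ∑ x, p x * (Gf (q * y0 + C) - L * Gf y0) = Gf (q * y0 + C) - L * Gf y0 := by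
        rw [← Finset.sum_mul, hpsum, one_mul]
      have e2 : ∑ x, p x * (Gf (q * y x + C) - L * Gf (y x)) =
          ∑ x, p x * Gf (q * y x + C) - L * ∑ x, p x * Gf (y x) := by
        rw [Finset.mul_sum, ← Finset.sum_sub_distrib]
        exact Finset.sum_congr rfl fun x _ => by ring
      rw [e1, e2, heqG] at hsum
      have hfin : Gf (q * y0 + C) ≤ ∑ x, p x * Gf (q * y x + C) := by linarith
      rw [ge_iff_le, g_eq_Gf]
      calc Gf (q * y0 + C) / Real.log 2 ≤ (∑ x, p x * Gf (q * y x + C)) / Real.log 2 := by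
            gcongr
        _ = ∑ x, p x * g (q * y x + C) := by
            rw [Finset.sum_div]
            exact Finset.sum_congr rfl fun x _ => by rw [g_eq_Gf, mul_div_assoc]
end

section
/- For every real q ≥ 1 and every real x > 0, the inequality (q·(1+x) − 1)·log₂( q·(1+x) / (q·(1+x) − 1) ) ≥ x·log₂( (1+x)/x ) holds. -/
open Real

private lemma f_deriv (t : ℝ) (ht : 0 < t) :
    HasDerivAt (fun t : ℝ => t * (Real.log (t + 1) - Real.log t))
      ((Real.log (t + 1) - Real.log t) + t * ((t + 1)⁻¹ - t⁻¹)) t := by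
  have h1 : HasDerivAt (fun t : ℝ => Real.log (t + 1)) ((t + 1)⁻¹) t := by
    have := ((hasDerivAt_id t).add_const 1).log (by positivity)
    simpa using this
  have h2 : HasDerivAt Real.log t⁻¹ t := Real.hasDerivAt_log ht.ne'
  have := (hasDerivAt_id t).mul (h1.sub h2)
  exact this.congr_deriv (by simp)

private lemma f_mono_s2 {x s : ℝ} (hx : 0 < x) (hxs : x ≤ s) :
    x * (Real.log (x + 1) - Real.log x) ≤ s * (Real.log (s + 1) - Real.log s) := by
  have key : MonotoneOn (fun t : ℝ => t * (Real.log (t + 1) - Real.log t)) (Set.Ioi 0) := by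
    apply monotoneOn_of_deriv_nonneg (convex_Ioi 0)
    · apply ContinuousOn.mul continuousOn_id
      apply ContinuousOn.sub
      · exact Real.continuousOn_log.comp (by fun_prop) (fun t ht => by
          simp only [Set.mem_Ioi] at ht; simp; positivity)
      · exact Real.continuousOn_log.mono (fun t ht => by
          simp only [Set.mem_Ioi] at ht; simpa using ht.ne')
    · intro t ht
      rw [interior_Ioi] at ht
      simp only [Set.mem_Ioi] at ht
      exact (f_deriv t ht).differentiableAt.differentiableWithinAt
    · intro t ht
      rw [interior_Ioi] at ht
      simp only [Set.mem_Ioi] at ht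
      rw [(f_deriv t ht).deriv]
      have hlog : 1 - (t + 1)⁻¹ * t ≤ Real.log (t + 1) - Real.log t := by
        have h := Real.log_le_sub_one_of_pos (x := t / (t + 1)) (by positivity)
        rw [Real.log_div ht.ne' (by positivity)] at h
        have : t / (t + 1) = (t + 1)⁻¹ * t := by ring
        linarith [this ▸ h]
      have ht1 : (0:ℝ) < t + 1 := by linarith
      have : t * ((t + 1)⁻¹ - t⁻¹) = (t + 1)⁻¹ * t - 1 := by
        field_simp
      nlinarith
  exact key (Set.mem_Ioi.mpr hx) (Set.mem_Ioi.mpr (lt_of_lt_of_le hx hxs)) hxs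

theorem stmt_2 (q x : ℝ) (hq : 1 ≤ q) (hx : 0 < x) :
    (q * (1 + x) - 1) * Real.logb 2 (q * (1 + x) / (q * (1 + x) - 1)) ≥
      x * Real.logb 2 ((1 + x) / x) := by
  set s : ℝ := q * (1 + x) - 1 with hs
  have hspos : 0 < s := by nlinarith
  have hsx : x ≤ s := by nlinarith
  have h1 : q * (1 + x) = s + 1 := by ring
  rw [h1, ge_iff_le]
  have hlog2 : (0:ℝ) < Real.log 2 := Real.log_pos (by norm_num)
  have e1 : Real.logb 2 ((s + 1) / s) = (Real.log (s + 1) - Real.log s) / Real.log 2 := by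
    rw [Real.logb, Real.log_div (by positivity) hspos.ne']
  have e2 : Real.logb 2 ((1 + x) / x) = (Real.log (x + 1) - Real.log x) / Real.log 2 := by
    rw [Real.logb, Real.log_div (by positivity) hx.ne', add_comm 1 x]
  rw [e1, e2]
  have := f_mono_s2 hx hsx
  rw [div_eq_mul_inv, div_eq_mul_inv, ← mul_assoc, ← mul_assoc]
  exact mul_le_mul_of_nonneg_right this (by positivity)
end

section
/- For every real q ∈ [0,1], every real C ≥ 0, and every real x > 0 such that q·x + C > 0, the inequality (q·x + C)·(1 + q·x + C)·log₂(1 + 1/(q·x + C)) ≥ q·x·(1+x)·log₂(1 + 1/x) holds. -/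
open Real Set

private noncomputable def fF (y : ℝ) : ℝ := y * (1 + y) * (Real.log (1 + y) - Real.log y)
private noncomputable def gG (y : ℝ) : ℝ := (1 + y) * (Real.log (1 + y) - Real.log y)

private lemma hasDerivAt_log1p {y : ℝ} (hy : 0 < y) :
    HasDerivAt (fun y : ℝ => Real.log (1 + y)) (1/(1+y)) y := by
  have := (Real.hasDerivAt_log (by linarith : (1:ℝ)+y ≠ 0)).comp y
    ((hasDerivAt_id y).const_add 1)
  simpa [one_div, Function.comp_def] using this

private lemma hasDerivAt_fF {y : ℝ} (hy : 0 < y) :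
    HasDerivAt fF ((1 + 2*y) * (Real.log (1+y) - Real.log y) - 1) y := by
  have h1 := hasDerivAt_log1p hy
  have h2 : HasDerivAt Real.log (1/y) y := by
    simpa [one_div] using Real.hasDerivAt_log hy.ne'
  have h3 : HasDerivAt (fun y : ℝ => y * (1 + y)) (1 + 2*y) y := by
    have := (hasDerivAt_id y).mul ((hasDerivAt_id y).const_add 1)
    exact this.congr_deriv (by show (1:ℝ) * (1 + y) + y * 1 = 1 + 2*y; ring)
  have h := h3.mul (h1.sub h2)
  have key : y * (1+y) * (1/(1+y) - 1/y) = -1 := by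
    field_simp; ring
  exact h.congr_deriv (by simp only [Pi.sub_apply]; linear_combination key)

private lemma hasDerivAt_gG {y : ℝ} (hy : 0 < y) :
    HasDerivAt gG ((Real.log (1+y) - Real.log y) - 1/y) y := by
  have h1 := hasDerivAt_log1p hy
  have h2 : HasDerivAt Real.log (1/y) y := by
    simpa [one_div] using Real.hasDerivAt_log hy.ne'
  have h3 : HasDerivAt (fun y : ℝ => (1 : ℝ) + y) 1 y := (hasDerivAt_id y).const_add 1
  have h := h3.mul (h1.sub h2)
  have key : (1+y) * (1/(1+y) - 1/y) = -(1/y) := by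
    field_simp; ring
  exact h.congr_deriv (by simp only [Pi.sub_apply]; linear_combination key)

private lemma L_pos {y : ℝ} (hy : 0 < y) : 0 < Real.log (1+y) - Real.log y := by
  have := Real.log_lt_log hy (by linarith : y < 1 + y)
  linarith

private lemma L_lb {y : ℝ} (hy : 0 < y) : (1+y) * (Real.log (1+y) - Real.log y) ≥ 1 := by
  have h1y : (0:ℝ) < 1 + y := by linarith
  have hpos : 0 < y / (1+y) := by positivity
  have h := Real.log_le_sub_one_of_pos hpos
  rw [Real.log_div hy.ne' h1y.ne'] at h
  have h2 := mul_le_mul_of_nonneg_left h h1y.le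
  have h3 : (1+y) * (y/(1+y) - 1) = -1 := by field_simp; ring
  nlinarith [h2, h3]

private lemma L_ub {y : ℝ} (hy : 0 < y) : y * (Real.log (1+y) - Real.log y) ≤ 1 := by
  have hpos : 0 < (1+y) / y := by positivity
  have h := Real.log_le_sub_one_of_pos hpos
  rw [Real.log_div (by linarith) hy.ne'] at h
  have h2 := mul_le_mul_of_nonneg_left h hy.le
  have h3 : y * ((1+y)/y - 1) = 1 := by field_simp; ring
  nlinarith [h2, h3]

private lemma fF_mono : MonotoneOn fF (Set.Ioi 0) := by
  apply StrictMonoOn.monotoneOn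
  apply strictMonoOn_of_deriv_pos (convex_Ioi 0)
  · exact fun y hy => (hasDerivAt_fF (hy : (0:ℝ) < y)).differentiableAt.continuousAt.continuousWithinAt
  · intro y hy
    rw [interior_Ioi] at hy
    have hy : (0:ℝ) < y := hy
    rw [(hasDerivAt_fF hy).deriv]
    have h1 := L_lb hy
    have h2 := L_pos hy
    nlinarith

private lemma gG_anti : AntitoneOn gG (Set.Ioi 0) := by
  apply antitoneOn_of_deriv_nonpos (convex_Ioi 0)
  · exact fun y hy => (hasDerivAt_gG (hy : (0:ℝ) < y)).differentiableAt.continuousAt.continuousWithinAt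
  · intro y hy
    rw [interior_Ioi] at hy
    have hy : (0:ℝ) < y := hy
    exact (hasDerivAt_gG hy).differentiableAt.differentiableWithinAt
  · intro y hy
    rw [interior_Ioi] at hy
    have hy : (0:ℝ) < y := hy
    rw [(hasDerivAt_gG hy).deriv]
    have h := L_ub hy
    have h2 : Real.log (1+y) - Real.log y ≤ 1/y := by
      rw [le_div_iff₀ hy]; nlinarith
    linarith

theorem stmt_8 (q C x : ℝ) (hq0 : 0 ≤ q) (hq1 : q ≤ 1) (hC : 0 ≤ C) (hx : 0 < x)
    (hqxC : 0 < q * x + C) :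
    (q * x + C) * (1 + (q * x + C)) * Real.logb 2 (1 + 1 / (q * x + C)) ≥
      q * x * (1 + x) * Real.logb 2 (1 + 1 / x) := by
  set a := q * x + C with ha
  have hlog2 : (0:ℝ) < Real.log 2 := Real.log_pos (by norm_num)
  have hrw : ∀ t : ℝ, 0 < t → Real.logb 2 (1 + 1/t) = (Real.log (1+t) - Real.log t) / Real.log 2 := by
    intro t ht
    rw [Real.logb, show (1:ℝ) + 1/t = (1+t)/t by field_simp; ring,
      Real.log_div (by linarith) ht.ne']
  rw [hrw a hqxC, hrw x hx, ge_iff_le, ← mul_div_assoc, ← mul_div_assoc,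
    div_le_div_iff_of_pos_right hlog2]
  rcases eq_or_lt_of_le (by positivity : (0:ℝ) ≤ q * x) with hqx | hqx
  · rw [← hqx]
    have hL := L_pos hqxC
    have hp : 0 < a * (1 + a) * (Real.log (1+a) - Real.log a) :=
      mul_pos (mul_pos hqxC (by linarith)) hL
    nlinarith
  · have h1 : fF (q*x) ≤ fF a := fF_mono hqx hqxC (by linarith)
    have h2 : gG x ≤ gG (q*x) := gG_anti hqx hx (by nlinarith)
    have h3 : q * x * gG x ≤ q * x * gG (q*x) := by nlinarith
    have h4 : q * x * gG (q*x) = fF (q*x) := by simp only [fF, gG]; ring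
    have h5 : q * x * gG x ≤ fF a := by linarith
    calc q*x*(1+x)*(Real.log (1+x) - Real.log x) = q*x*gG x := by simp only [gG]; ring
      _ ≤ fF a := h5
      _ = a*(1+a)*(Real.log (1+a) - Real.log a) := by simp only [fF]
end

section
/- Fix real numbers N_S > 0, N_B ≥ 0, and λ ∈ [0,1]. Then as the real parameter κ tends to infinity, the sum [ g(κ·λ·N_S + (κ−1)·(N_B+1)) − g((κ−1)·(N_B+1)) ] + [ g((κ−1)·(N_S+1) + κ·N_B) − g((κ−1)·(λ·N_S+1) + κ·N_B) ] converges to log₂( N_S/(N_B+1) + 1 ), a limit independent of both the amplifier gain κ and the photon-number-sharing parameter λ. -/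
open Filter Topology

lemma h_tendsto : Tendsto (fun x : ℝ => (x + 1) * Real.logb 2 ((x + 1) / x))
    atTop (𝓝 (1 / Real.log 2)) := by
  have h1 : Tendsto (fun x : ℝ => x * Real.log (1 + 1 / x)) atTop (𝓝 1) :=
    Real.tendsto_mul_log_one_add_div_atTop 1
  have h2 : Tendsto (fun x : ℝ => Real.log (1 + 1 / x)) atTop (𝓝 0) := by
    simpa [Function.comp_def] using (Real.continuousAt_log one_ne_zero).tendsto.comp
      (by simpa using tendsto_const_nhds.add ((tendsto_inv_atTop_zero (𝕜 := ℝ)).congr fun x => (one_div x).symm))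
  have h3 : Tendsto (fun x : ℝ => (x + 1) * Real.log (1 + 1 / x)) atTop (𝓝 1) := by
    have := h1.add h2
    simp only [add_zero] at this
    refine this.congr fun x => ?_
    ring
  have := h3.div_const (Real.log 2)
  refine this.congr' ?_
  filter_upwards [eventually_gt_atTop (0 : ℝ)] with x hx
  rw [Real.logb, mul_div_assoc]
  congr 2
  rw [add_div, div_self hx.ne']

lemma g_diff_tendsto (a b : ℝ → ℝ) (ha : Tendsto a atTop atTop)
    (hb : Tendsto b atTop atTop) (r : ℝ) (hr : 0 < r)
    (hab : Tendsto (fun κ => a κ / b κ) atTop (𝓝 r)) :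
    Tendsto (fun κ => g (a κ) - g (b κ)) atTop (𝓝 (Real.logb 2 r)) := by
  have hmain : Tendsto (fun κ =>
      ((a κ + 1) * Real.logb 2 ((a κ + 1) / a κ)
        - (b κ + 1) * Real.logb 2 ((b κ + 1) / b κ))
      + Real.logb 2 (a κ / b κ)) atTop (𝓝 (Real.logb 2 r)) := by
    have hA := h_tendsto.comp ha
    have hB := h_tendsto.comp hb
    have h0 : Tendsto (fun κ =>
        (a κ + 1) * Real.logb 2 ((a κ + 1) / a κ)
          - (b κ + 1) * Real.logb 2 ((b κ + 1) / b κ)) atTop (𝓝 0) := by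
      simpa using hA.sub hB
    have hL : Tendsto (fun κ => Real.logb 2 (a κ / b κ)) atTop (𝓝 (Real.logb 2 r)) :=
      (Real.continuousAt_logb hr.ne').tendsto.comp hab
    simpa using h0.add hL
  refine hmain.congr' ?_
  filter_upwards [ha.eventually_gt_atTop 0, hb.eventually_gt_atTop 0] with κ hκa hκb
  have key : ∀ x : ℝ, 0 < x →
      g x = (x + 1) * Real.logb 2 ((x + 1) / x) + Real.logb 2 x := by
    intro x hx
    rw [Real.logb_div (by positivity) hx.ne']
    simp only [g]
    ring
  rw [key _ hκa, key _ hκb, Real.logb_div hκa.ne' hκb.ne']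
  ring

lemma lin_atTop (c d : ℝ) (hc : 0 < c) :
    Tendsto (fun κ : ℝ => c * κ + d) atTop atTop :=
  tendsto_atTop_add_const_right _ d (tendsto_id.const_mul_atTop hc)

lemma lin_ratio (c₁ d₁ c₂ d₂ : ℝ) (h₁ : 0 < c₁) (h₂ : 0 < c₂) :
    Tendsto (fun κ : ℝ => (c₁ * κ + d₁) / (c₂ * κ + d₂)) atTop (𝓝 (c₁ / c₂)) := by
  have hnum : Tendsto (fun κ : ℝ => c₁ + d₁ / κ) atTop (𝓝 c₁) := by
    simpa using tendsto_const_nhds.add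
      (((tendsto_inv_atTop_zero (𝕜 := ℝ)).const_mul d₁).congr fun x => by
        rw [div_eq_mul_inv])
  have hden : Tendsto (fun κ : ℝ => c₂ + d₂ / κ) atTop (𝓝 c₂) := by
    simpa using tendsto_const_nhds.add
      (((tendsto_inv_atTop_zero (𝕜 := ℝ)).const_mul d₂).congr fun x => by
        rw [div_eq_mul_inv])
  have := hnum.div hden h₂.ne'
  refine this.congr' ?_
  filter_upwards [eventually_gt_atTop (0 : ℝ),
    (lin_atTop c₂ d₂ h₂).eventually_gt_atTop 0] with κ hκ hden2
  have hκ' : κ ≠ 0 := hκ.ne'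
  have hd : c₂ + d₂ / κ ≠ 0 := by
    have : c₂ + d₂ / κ = (c₂ * κ + d₂) / κ := by field_simp
    rw [this]
    positivity
  show (c₁ + d₁ / κ) / (c₂ + d₂ / κ) = (c₁ * κ + d₁) / (c₂ * κ + d₂)
  rw [div_eq_div_iff hd hden2.ne']
  field_simp

theorem stmt_14 (N_S N_B lam : ℝ) (hNS : 0 < N_S) (hNB : 0 ≤ N_B)
    (hl0 : 0 ≤ lam) (hl1 : lam ≤ 1) :
    Tendsto
      (fun κ : ℝ =>
        (g (κ * lam * N_S + (κ - 1) * (N_B + 1)) - g ((κ - 1) * (N_B + 1))) +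
        (g ((κ - 1) * (N_S + 1) + κ * N_B) - g ((κ - 1) * (lam * N_S + 1) + κ * N_B)))
      atTop (𝓝 (Real.logb 2 (N_S / (N_B + 1) + 1))) := by
  have hB1 : (0:ℝ) < N_B + 1 := by linarith
  have hc1 : (0:ℝ) < lam * N_S + (N_B + 1) := by nlinarith
  have hc2 : (0:ℝ) < N_S + 1 + N_B := by linarith
  have hc3 : (0:ℝ) < lam * N_S + 1 + N_B := by nlinarith
  have T1 : Tendsto (fun κ : ℝ =>
      g (κ * lam * N_S + (κ - 1) * (N_B + 1)) - g ((κ - 1) * (N_B + 1))) atTop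
      (𝓝 (Real.logb 2 ((lam * N_S + (N_B + 1)) / (N_B + 1)))) := by
    have := g_diff_tendsto (fun κ => (lam * N_S + (N_B + 1)) * κ + (-(N_B + 1)))
      (fun κ => (N_B + 1) * κ + (-(N_B + 1))) (lin_atTop _ _ hc1) (lin_atTop _ _ hB1)
      _ (by positivity) (lin_ratio _ _ _ _ hc1 hB1)
    refine this.congr fun κ => ?_
    exact congrArg₂ (· - ·) (congrArg g (by ring)) (congrArg g (by ring))
  have T2 : Tendsto (fun κ : ℝ =>
      g ((κ - 1) * (N_S + 1) + κ * N_B) - g ((κ - 1) * (lam * N_S + 1) + κ * N_B)) atTop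
      (𝓝 (Real.logb 2 ((N_S + 1 + N_B) / (lam * N_S + 1 + N_B)))) := by
    have := g_diff_tendsto (fun κ => (N_S + 1 + N_B) * κ + (-(N_S + 1)))
      (fun κ => (lam * N_S + 1 + N_B) * κ + (-(lam * N_S + 1)))
      (lin_atTop _ _ hc2) (lin_atTop _ _ hc3)
      _ (by positivity) (lin_ratio _ _ _ _ hc2 hc3)
    refine this.congr fun κ => ?_
    exact congrArg₂ (· - ·) (congrArg g (by ring)) (congrArg g (by ring))
  have hsum := T1.add T2
  have heq : Real.logb 2 ((lam * N_S + (N_B + 1)) / (N_B + 1))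
      + Real.logb 2 ((N_S + 1 + N_B) / (lam * N_S + 1 + N_B))
      = Real.logb 2 (N_S / (N_B + 1) + 1) := by
    rw [← Real.logb_mul (by positivity) (by positivity)]
    congr 1
    field_simp
    ring
  rwa [heq] at hsum
end
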